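/- Let X_1, …, X_n be Banach spaces, X = ∏_{i=1}^n X_i with norm ‖x‖ = max_i ‖x_i‖. Let M be a finite family of maps F : X → X sharing a common fixed point x̃ ∈ X, each F ∈ M having a Lipschitz matrix A_F ∈ ℝ^{n×n}, and let μ : M → [0,1] with ∑_{F∈M} μ(F) = 1. Let p > 0, and suppose there exist C > 0 and β > 0 such that for all k ≥ 1 and all y ∈ ℝ^n, ∑_{w ∈ M^k} (∏_{m=1}^k μ(w_m)) ‖A_{w_k} ⋯ A_{w_1} y‖_∞^p ≤ C e^{−βk} ‖y‖_∞^p. Then for all k ≥ 1 and all x^0 ∈ X, ∑_{w ∈ M^k} (∏_{m=1}^k μ(w_m)) ‖w_k ∘ ⋯ ∘ w_1(x^0) − x̃‖^p ≤ C e^{−βk} ‖x^0 − x̃‖^p. -/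
import Mathlib


open Matrix BigOperators

/-- Ordered matrix product `A (w (k-1)) * ⋯ * A (w 0)` along a word `w`
(i.e. `A_{w_k} ⋯ A_{w_1}` with 1-based indexing). -/
def wordProd {n k : ℕ} {ι : Type*} (A : ι → Matrix (Fin n) (Fin n) ℝ)
    (w : Fin k → ι) : Matrix (Fin n) (Fin n) ℝ :=
  ((List.ofFn fun m => A (w m)).reverse).prod

/-- Ordered composition `F (w (k-1)) ∘ ⋯ ∘ F (w 0)` applied to `x0`
(i.e. `w_k ∘ ⋯ ∘ w_1 (x^0)` with 1-based indexing). -/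
def wordComp {X : Type*} {k : ℕ} {ι : Type*} (F : ι → X → X)
    (w : Fin k → ι) (x0 : X) : X :=
  (List.ofFn fun m => F (w m)).foldl (fun x f => f x) x0

lemma wordProd_succ {n k : ℕ} {ι : Type*} (A : ι → Matrix (Fin n) (Fin n) ℝ)
    (w : Fin (k+1) → ι) :
    wordProd A w = wordProd A (w ∘ Fin.succ) * A (w 0) := by
  simp [wordProd, List.ofFn_succ, List.prod_append, Function.comp]

lemma wordComp_succ {X : Type*} {k : ℕ} {ι : Type*} (F : ι → X → X)
    (w : Fin (k+1) → ι) (x0 : X) :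
    wordComp F w x0 = wordComp F (w ∘ Fin.succ) (F (w 0) x0) := by
  simp [wordComp, List.ofFn_succ, Function.comp]

lemma wordProd_nonneg {n k : ℕ} {ι : Type*} (A : ι → Matrix (Fin n) (Fin n) ℝ)
    (hA : ∀ f i j, 0 ≤ A f i j) : ∀ (w : Fin k → ι) (i j : Fin n),
    0 ≤ wordProd A w i j := by
  induction k with
  | zero =>
    intro w i j
    simp [wordProd, Matrix.one_apply]
    positivity
  | succ k ih =>
    intro w i j
    rw [wordProd_succ, Matrix.mul_apply]
    exact Finset.sum_nonneg fun l _ => mul_nonneg (ih _ i l) (hA _ l j)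

lemma mulVec_mono {n : ℕ} (M : Matrix (Fin n) (Fin n) ℝ)
    (hM : ∀ i j, 0 ≤ M i j) {u v : Fin n → ℝ} (huv : ∀ j, u j ≤ v j) (i : Fin n) :
    (M *ᵥ u) i ≤ (M *ᵥ v) i := by
  simp only [Matrix.mulVec, dotProduct]
  exact Finset.sum_le_sum fun j _ => mul_le_mul_of_nonneg_left (huv j) (hM i j)

theorem stmt7 {n : ℕ} {X : Fin n → Type*}
    [∀ i, NormedAddCommGroup (X i)] [∀ i, NormedSpace ℝ (X i)]
    [∀ i, CompleteSpace (X i)]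
    {ι : Type*} [Fintype ι]
    (F : ι → (∀ i, X i) → ∀ i, X i) (A : ι → Matrix (Fin n) (Fin n) ℝ)
    (hA : ∀ f i j, 0 ≤ A f i j)
    (hLip : ∀ f, ∀ x y : ∀ i, X i, ∀ i,
      ‖F f x i - F f y i‖ ≤ ∑ j, A f i j * ‖x j - y j‖)
    (xfix : ∀ i, X i) (hfix : ∀ f, F f xfix = xfix)
    (μ : ι → ℝ) (hμ0 : ∀ f, 0 ≤ μ f) (hμ1 : ∑ f, μ f = 1)
    (p : ℝ) (hp : 0 < p) (C β : ℝ) (hC : 0 < C) (hβ : 0 < β)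
    (hyp : ∀ k : ℕ, 1 ≤ k → ∀ y : Fin n → ℝ,
      ∑ w : Fin k → ι, (∏ m, μ (w m)) * ‖wordProd A w *ᵥ y‖ ^ p ≤
        C * Real.exp (-β * k) * ‖y‖ ^ p) :
    ∀ k : ℕ, 1 ≤ k → ∀ x0 : ∀ i, X i,
      ∑ w : Fin k → ι, (∏ m, μ (w m)) * ‖wordComp F w x0 - xfix‖ ^ p ≤
        C * Real.exp (-β * k) * ‖x0 - xfix‖ ^ p := by
  -- key componentwise estimate
  have key : ∀ k : ℕ, ∀ w : Fin k → ι, ∀ x : ∀ i, X i, ∀ i : Fin n,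
      ‖wordComp F w x i - xfix i‖ ≤
        (wordProd A w *ᵥ fun j => ‖x j - xfix j‖) i := by
    intro k
    induction k with
    | zero =>
      intro w x i
      simp [wordComp, wordProd, Matrix.one_mulVec]
    | succ k ih =>
      intro w x i
      rw [wordComp_succ, wordProd_succ, ← Matrix.mulVec_mulVec]
      refine le_trans (ih (w ∘ Fin.succ) (F (w 0) x) i) ?_
      refine mulVec_mono _ (wordProd_nonneg A hA _) (fun j => ?_) i
      have := hLip (w 0) x xfix j
      rw [hfix (w 0)] at this
      simpa [Matrix.mulVec, dotProduct] using this
  intro k hk x0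
  set y : Fin n → ℝ := fun j => ‖x0 j - xfix j‖ with hy
  have hnorm : ‖x0 - xfix‖ = ‖y‖ := by
    simp only [Pi.norm_def, hy]
    congr 1
    refine Finset.sup_congr rfl fun i _ => ?_
    simp [Pi.sub_apply]
  rw [hnorm]
  refine le_trans (Finset.sum_le_sum fun w _ => ?_) (hyp k hk y)
  refine mul_le_mul_of_nonneg_left ?_ (Finset.prod_nonneg fun m _ => hμ0 _)
  refine Real.rpow_le_rpow (norm_nonneg _) ?_ hp.le
  rw [pi_norm_le_iff_of_nonneg (norm_nonneg _)]
  intro i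
  rw [Pi.sub_apply]
  refine le_trans (key k w x0 i) ?_
  calc (wordProd A w *ᵥ y) i ≤ ‖(wordProd A w *ᵥ y) i‖ := le_abs_self _
    _ ≤ ‖wordProd A w *ᵥ y‖ := norm_le_pi_norm _ i
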